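/- arXiv:1012.5479 — 2 statements merged into one kernel-verified Lean document; each statement's English description precedes it below -/
import Mathlib

section
/- Suppose a fixed straight solid boundary has constant unit normal n with u0 · n = 0 for a constant fluid velocity u0, and a uniform state (ρ0, u0, p0). Then for each cut cell C, the increment (1-α_C)Δw_C computed by the modified flux formula vanishes for all four conservative components (mass, x-momentum, y-momentum, energy). -/
/-- Free slip along a fixed straight boundary with normal `n` satisfying `u₀ · n = 0`:
for a uniform state `(ρ₀, u₀, v₀, p₀)`, the cut-cell increment `(1-α_C) Δw_C` of the
modified flux formula vanishes for all four conservative components. -/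
theorem free_slip_preserved (ι : Type*) [Fintype ι]
    (ρ0 u0 v0 p0 e0 Δt Δx Δy : ℝ) (hΔx : 0 < Δx) (hΔy : 0 < Δy)
    (nx ny : ℝ) (hn : u0 * nx + v0 * ny = 0)
    (S : ι → ℝ)
    (κl κr κb κt : ℝ)
    (hGCLx : κl = κr + ∑ F, (S F / Δy) * nx)
    (hGCLy : κb = κt + ∑ F, (S F / Δx) * ny)
    (fl fr fb ft : Fin 4 → ℝ)
    (hfl : fl = ![ρ0 * u0, ρ0 * u0 ^ 2 + p0, ρ0 * u0 * v0, (ρ0 * e0 + p0) * u0])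
    (hfr : fr = fl)
    (hfb : fb = ![ρ0 * v0, ρ0 * u0 * v0, ρ0 * v0 ^ 2 + p0, (ρ0 * e0 + p0) * v0])
    (hft : ft = fb)
    (fF : ι → Fin 4 → ℝ)
    (hfF : ∀ F, fF F = ![0, p0 * nx, p0 * ny, 0]) :
    Δt • (((1 - κl) / Δx) • fl - ((1 - κr) / Δx) • fr
        + ((1 - κb) / Δy) • fb - ((1 - κt) / Δy) • ft)
      + (Δt / (Δx * Δy)) • ∑ F, S F • fF F = 0 := by
  subst hfr hft hfl hfb
  set T := ∑ F, S F with hT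
  have hTx : T * nx = (κl - κr) * Δy := by
    have h1 : ∑ F, (S F / Δy) * nx = T * nx / Δy := by
      rw [hT, Finset.sum_mul, Finset.sum_div]
      exact Finset.sum_congr rfl fun F _ => by ring
    rw [h1] at hGCLx
    field_simp at hGCLx
    linarith
  have hTy : T * ny = (κb - κt) * Δx := by
    have h1 : ∑ F, (S F / Δx) * ny = T * ny / Δx := by
      rw [hT, Finset.sum_mul, Finset.sum_div]
      exact Finset.sum_congr rfl fun F _ => by ring
    rw [h1] at hGCLy
    field_simp at hGCLy
    linarith
  have hA : (1 - κr) / Δx = (1 - κl) / Δx + T * nx / (Δx * Δy) := by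
    rw [hTx]; field_simp; ring
  have hB : (1 - κt) / Δy = (1 - κb) / Δy + T * ny / (Δx * Δy) := by
    rw [hTy]; field_simp; ring
  funext i
  simp only [Pi.add_apply, Pi.smul_apply, Pi.sub_apply, smul_eq_mul, Pi.zero_apply,
    Finset.sum_apply, hfF]
  have hx := hΔx.ne'
  have hy := hΔy.ne'
  fin_cases i <;>
    simp only [Fin.zero_eta, Fin.mk_one, Fin.isValue, show (⟨2, by norm_num⟩ : Fin 4) = 2 from rfl,
        show (⟨3, by norm_num⟩ : Fin 4) = 3 from rfl,
        Matrix.cons_val_zero, Matrix.cons_val_one, Matrix.head_cons,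
        Matrix.cons_val_two, Matrix.tail_cons, Matrix.cons_val_three, mul_zero,
        Finset.sum_const_zero, ← Finset.sum_mul, ← hT]
  · rw [hA, hB]; linear_combination (-Δt * T * ρ0 / (Δx * Δy)) * hn
  · rw [hA, hB]; linear_combination (-Δt * T * ρ0 * u0 / (Δx * Δy)) * hn
  · rw [hA, hB]; linear_combination (-Δt * T * ρ0 * v0 / (Δx * Δy)) * hn
  · rw [hA, hB]; linear_combination (-Δt * T * (ρ0 * e0 + p0) / (Δx * Δy)) * hn
end

section
/- For a rigid body translating at constant velocity (u0, v0) with no rotation in a uniform flow of the same velocity, the swept quantity for a face F is Δw_F^n = (Δt S_F / (ΔxΔy))(u0 n_F^x + v0 n_F^y) w_0, and combining with the GCL relations the total cut-cell increment vanishes: (1-α_C^{n+1})Δw_C = 0 for every cell. -/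
/-!
By the GCL relations, the differences of the opposite Cartesian fluxes of the uniform state
equal minus the sum over the embedded faces of `(S_F/(ΔxΔy)) (n_F^x f(w₀) + n_F^y g(w₀))`.
For a uniform state the normal Euler flux splits into an advective part `(V·n) w₀` and a
pressure part `p₀ (0, n^x, n^y, V·n)`; the first is the swept quantity and the second is the
wall flux, so the contributions cancel face by face.
-/

open Finset

section CutCell

variable {M : Type*} [AddCommGroup M] [Module ℝ M] {ι : Type*} [Fintype ι]

theorem cutCell_flux_balance_of_gcl (Δt Δx Δy κl κr κb κt : ℝ) (S nx ny : ι → ℝ)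
    (hGCLx : κl = κr + ∑ F, (S F / Δy) * nx F)
    (hGCLy : κb = κt + ∑ F, (S F / Δx) * ny F) (fx fy : M) :
    Δt • (((1 - κl) / Δx) • fx - ((1 - κr) / Δx) • fx
        + ((1 - κb) / Δy) • fy - ((1 - κt) / Δy) • fy)
      = -(Δt / (Δx * Δy)) • ∑ F, S F • (nx F • fx + ny F • fy) := by
  simp only [smul_add, smul_smul, sum_add_distrib, ← sum_smul]
  simp only [hGCLx, hGCLy, div_mul_eq_mul_div, ← sum_div]
  module

end CutCell

def eulerState (ρ u v E : ℝ) : Fin 4 → ℝ := ![ρ, ρ * u, ρ * v, ρ * E]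

def eulerFluxX (ρ u v p E : ℝ) : Fin 4 → ℝ :=
  ![ρ * u, ρ * u ^ 2 + p, ρ * u * v, (ρ * E + p) * u]

def eulerFluxY (ρ u v p E : ℝ) : Fin 4 → ℝ :=
  ![ρ * v, ρ * u * v, ρ * v ^ 2 + p, (ρ * E + p) * v]

def pressureWallFlux (p u v nx ny : ℝ) : Fin 4 → ℝ :=
  ![0, p * nx, p * ny, p * (u * nx + v * ny)]

theorem normal_eulerFlux_eq (ρ u v p E nx ny : ℝ) :
    nx • eulerFluxX ρ u v p E + ny • eulerFluxY ρ u v p E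
      = (u * nx + v * ny) • eulerState ρ u v E + pressureWallFlux p u v nx ny := by
  ext i
  fin_cases i <;> simp [eulerFluxX, eulerFluxY, eulerState, pressureWallFlux] <;> ring

theorem uniform_motion_preserved_general (ι : Type*) [Fintype ι]
    (ρ0 u0 v0 p0 E0 Δt Δx Δy : ℝ)
    (S nx ny : ι → ℝ)
    (κl κr κb κt : ℝ)
    (hGCLx : κl = κr + ∑ F, (S F / Δy) * nx F)
    (hGCLy : κb = κt + ∑ F, (S F / Δx) * ny F)
    (w0 fl fr fb ft : Fin 4 → ℝ)
    (hw0 : w0 = ![ρ0, ρ0 * u0, ρ0 * v0, ρ0 * E0])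
    (hfl : fl = ![ρ0 * u0, ρ0 * u0 ^ 2 + p0, ρ0 * u0 * v0, (ρ0 * E0 + p0) * u0])
    (hfr : fr = fl)
    (hfb : fb = ![ρ0 * v0, ρ0 * u0 * v0, ρ0 * v0 ^ 2 + p0, (ρ0 * E0 + p0) * v0])
    (hft : ft = fb)
    -- wall flux with `p̄_x = p̄_y = p₀` and `V_F^{n+1/2} = (u₀, v₀)`
    (fF : ι → Fin 4 → ℝ)
    (hfF : ∀ F, fF F = ![0, p0 * nx F, p0 * ny F, p0 * (u0 * nx F + v0 * ny F)])
    -- swept quantities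
    (ΔwF : ι → Fin 4 → ℝ)
    (hΔwF : ∀ F, ΔwF F = (((Δt * S F) / (Δx * Δy)) * (u0 * nx F + v0 * ny F)) • w0) :
    Δt • (((1 - κl) / Δx) • fl - ((1 - κr) / Δx) • fr
        + ((1 - κb) / Δy) • fb - ((1 - κt) / Δy) • ft)
      + (Δt / (Δx * Δy)) • ∑ F, S F • fF F
      + ∑ F, ΔwF F = 0 := by
  have hface : ∀ F, nx F • fl + ny F • fb = (u0 * nx F + v0 * ny F) • w0 + fF F := by
    intro F
    rw [hfl, hfb, hw0, hfF]
    exact normal_eulerFlux_eq ρ0 u0 v0 p0 E0 (nx F) (ny F)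
  have hswept : ∀ F, ΔwF F = (Δt / (Δx * Δy)) • S F • (u0 * nx F + v0 * ny F) • w0 := by
    intro F
    rw [hΔwF]
    module
  rw [hfr, hft, cutCell_flux_balance_of_gcl Δt Δx Δy κl κr κb κt S nx ny hGCLx hGCLy]
  simp only [hface, hswept, smul_add, sum_add_distrib, ← smul_sum, neg_smul]
  abel

/-- Steady constant flow with a rigid body translating at the same constant velocity
`(u₀, v₀)` with no rotation: the swept quantity of a face `F` is
`Δw_F = (Δt S_F/(ΔxΔy))(u₀ n_F^x + v₀ n_F^y) w₀`, and combining with the GCL relations,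
the total cut-cell increment of the Embedded Boundary update vanishes:
`(1-α_C^{n+1}) Δw_C = 0` in every cell. -/
theorem uniform_motion_preserved (ι : Type*) [Fintype ι]
    (ρ0 u0 v0 p0 E0 Δt Δx Δy : ℝ) (hΔx : 0 < Δx) (hΔy : 0 < Δy)
    (S nx ny : ι → ℝ)
    (κl κr κb κt : ℝ)
    (hGCLx : κl = κr + ∑ F, (S F / Δy) * nx F)
    (hGCLy : κb = κt + ∑ F, (S F / Δx) * ny F)
    (w0 fl fr fb ft : Fin 4 → ℝ)
    (hw0 : w0 = ![ρ0, ρ0 * u0, ρ0 * v0, ρ0 * E0])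
    (hfl : fl = ![ρ0 * u0, ρ0 * u0 ^ 2 + p0, ρ0 * u0 * v0, (ρ0 * E0 + p0) * u0])
    (hfr : fr = fl)
    (hfb : fb = ![ρ0 * v0, ρ0 * u0 * v0, ρ0 * v0 ^ 2 + p0, (ρ0 * E0 + p0) * v0])
    (hft : ft = fb)
    -- wall flux with `p̄_x = p̄_y = p₀` and `V_F^{n+1/2} = (u₀, v₀)`
    (fF : ι → Fin 4 → ℝ)
    (hfF : ∀ F, fF F = ![0, p0 * nx F, p0 * ny F, p0 * (u0 * nx F + v0 * ny F)])
    -- swept quantities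
    (ΔwF : ι → Fin 4 → ℝ)
    (hΔwF : ∀ F, ΔwF F = (((Δt * S F) / (Δx * Δy)) * (u0 * nx F + v0 * ny F)) • w0) :
    Δt • (((1 - κl) / Δx) • fl - ((1 - κr) / Δx) • fr
        + ((1 - κb) / Δy) • fb - ((1 - κt) / Δy) • ft)
      + (Δt / (Δx * Δy)) • ∑ F, S F • fF F
      + ∑ F, ΔwF F = 0 :=
  uniform_motion_preserved_general ι ρ0 u0 v0 p0 E0 Δt Δx Δy S nx ny κl κr κb κt hGCLx hGCLy w0 fl
    fr fb ft hw0 hfl hfr hfb hft fF hfF ΔwF hΔwF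
end
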